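/- The SLD Fisher information divided by 4, I_ρ(H) := F_ρ(H)/4, is convex in the state: for density matrices ρ_k and probability weights q_k, I_{∑_k q_k ρ_k}(H) ≤ ∑_k q_k I_{ρ_k}(H). -/

import Mathlib

open scoped ComplexOrder

open Matrix in
/-- SLD Fisher information `F_ρ(H) = ∑_{i,j} 2(p_i−p_j)²/(p_i+p_j) |⟨i|H|j⟩|²`,
computed in a spectral basis of the Hermitian matrix `ρ`. -/
noncomputable def sldFisher {d : ℕ} (ρ : Matrix (Fin d) (Fin d) ℂ)
    (hρ : ρ.IsHermitian) (H : Matrix (Fin d) (Fin d) ℂ) : ℝ :=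
  ∑ i, ∑ j,
    2 * (hρ.eigenvalues i - hρ.eigenvalues j) ^ 2 / (hρ.eigenvalues i + hρ.eigenvalues j) *
      Complex.normSq (star (hρ.eigenvectorBasis i : Fin d → ℂ) ⬝ᵥ
        H.mulVec (hρ.eigenvectorBasis j : Fin d → ℂ))

namespace SLDAux
open Matrix
variable {d : ℕ}

lemma dot_eq_conj_entry (ρ : Matrix (Fin d) (Fin d) ℂ) (hρ : ρ.IsHermitian)
    (M : Matrix (Fin d) (Fin d) ℂ) (i j : Fin d) :
    star (hρ.eigenvectorBasis i : Fin d → ℂ) ⬝ᵥ M.mulVec (hρ.eigenvectorBasis j : Fin d → ℂ)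
      = (star (hρ.eigenvectorUnitary : Matrix (Fin d) (Fin d) ℂ) * M *
          (hρ.eigenvectorUnitary : Matrix (Fin d) (Fin d) ℂ)) i j := by
  simp only [Matrix.mul_apply, Matrix.mulVec, dotProduct, Pi.star_apply,
    Matrix.star_apply, Matrix.IsHermitian.eigenvectorUnitary_apply, WithLp.equiv,
    Equiv.refl_apply, Finset.mul_sum, Finset.sum_mul]
  rw [Finset.sum_comm]
  congr 1; ext a; congr 1; ext b
  exact (mul_assoc _ _ _).symm

lemma trace_conj (U : Matrix.unitaryGroup (Fin d) ℂ) (M : Matrix (Fin d) (Fin d) ℂ) :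
    Matrix.trace (star (U : Matrix (Fin d) (Fin d) ℂ) * M * (U : Matrix (Fin d) (Fin d) ℂ))
      = Matrix.trace M := by
  rw [Matrix.trace_mul_cycle, (Matrix.mem_unitaryGroup_iff).mp U.2, one_mul]

/-- the scalar term -/
noncomputable def gTerm (a b : ℝ) (m n : ℂ) : ℝ :=
  2 * (Complex.I * ((a : ℂ) - (b : ℂ)) * m * (starRingEnd ℂ) n).re
    - (a + b) / 2 * Complex.normSq n

lemma gTerm_le (a b : ℝ) (ha : 0 ≤ a) (hb : 0 ≤ b) (m n : ℂ) :
    gTerm a b m n ≤ 2 * (a - b) ^ 2 / (a + b) * Complex.normSq m := by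
  unfold gTerm
  rcases eq_or_lt_of_le (add_nonneg ha hb) with hs | hs
  · have ha0 : a = 0 := by linarith
    have hb0 : b = 0 := by linarith
    simp [ha0, hb0]
  · have hre : (Complex.I * ((a : ℂ) - (b : ℂ)) * m * (starRingEnd ℂ) n).re
        ≤ |a - b| * ‖m‖ * ‖n‖ := by
      calc (Complex.I * ((a : ℂ) - (b : ℂ)) * m * (starRingEnd ℂ) n).re
          ≤ ‖Complex.I * ((a : ℂ) - (b : ℂ)) * m * (starRingEnd ℂ) n‖ :=
            Complex.re_le_norm _
        _ = |a - b| * ‖m‖ * ‖n‖ := by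
            simp [_root_.map_mul, Complex.norm_I, ← Complex.ofReal_sub, Complex.norm_real]
    have hm2 : Complex.normSq m = ‖m‖ ^ 2 := (Complex.sq_norm m).symm
    have hn2 : Complex.normSq n = ‖n‖ ^ 2 := (Complex.sq_norm n).symm
    rw [hm2, hn2, show 2 * (a - b) ^ 2 / (a + b) * ‖m‖ ^ 2
      = 2 * (a - b) ^ 2 * ‖m‖ ^ 2 / (a + b) from by ring, le_div_iff₀ hs]
    nlinarith [sq_nonneg (2 * |a - b| * ‖m‖ - (a + b) * ‖n‖),
      norm_nonneg m, norm_nonneg n, sq_abs (a - b), abs_nonneg (a - b),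
      mul_le_mul_of_nonneg_right hre (le_of_lt hs)]

lemma gTerm_eq (a b : ℝ) (ha : 0 ≤ a) (hb : 0 ≤ b) (m : ℂ) :
    gTerm a b m (Complex.I * ((2 * (a - b) / (a + b) : ℝ) : ℂ) * m)
      = 2 * (a - b) ^ 2 / (a + b) * Complex.normSq m := by
  unfold gTerm
  rcases eq_or_lt_of_le (add_nonneg ha hb) with hs | hs
  · have ha0 : a = 0 := by linarith
    have hb0 : b = 0 := by linarith
    simp [ha0, hb0]
  · have hsne : a + b ≠ 0 := ne_of_gt hs
    set c : ℝ := 2 * (a - b) / (a + b) with hc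
    have h1 : (Complex.I * ((a : ℂ) - (b : ℂ)) * m *
        (starRingEnd ℂ) (Complex.I * (c : ℂ) * m)).re = (a - b) * c * Complex.normSq m := by
      have : Complex.I * ((a : ℂ) - (b : ℂ)) * m * (starRingEnd ℂ) (Complex.I * (c : ℂ) * m)
          = (((a - b) * c * Complex.normSq m : ℝ) : ℂ) := by
        simp only [_root_.map_mul, Complex.conj_I, Complex.conj_ofReal]
        calc Complex.I * ((a : ℂ) - (b : ℂ)) * m * (-Complex.I * (c : ℂ) * (starRingEnd ℂ) m)
            = ((a : ℂ) - (b : ℂ)) * (c : ℂ) * (Complex.I * -Complex.I) * (m * (starRingEnd ℂ) m) := by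
              ring
          _ = (((a - b) * c * Complex.normSq m : ℝ) : ℂ) := by
              rw [Complex.mul_conj, show Complex.I * -Complex.I = 1 by
                simp [Complex.I_mul_I]]
              push_cast
              ring
      rw [this, Complex.ofReal_re]
    have h2 : Complex.normSq (Complex.I * (c : ℂ) * m) = c ^ 2 * Complex.normSq m := by
      simp [Complex.normSq_mul, Complex.normSq_I, sq, Complex.normSq_ofReal]
      try ring
    rw [h1, h2, hc]
    field_simp
    ring
end SLDAux

namespace SLDAux2
open Matrix SLDAux
variable {d : ℕ}

lemma term_re (a b : ℝ) (m n : ℂ) :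
    ((-2) * Complex.I * ((b : ℂ) * ((starRingEnd ℂ) n * m) - (a : ℂ) * (m * (starRingEnd ℂ) n))
      - (((a + b) / 2 * Complex.normSq n : ℝ) : ℂ)).re = gTerm a b m n := by
  rw [show (-2) * Complex.I * ((b : ℂ) * ((starRingEnd ℂ) n * m)
        - (a : ℂ) * (m * (starRingEnd ℂ) n))
      = ((2:ℝ) : ℂ) * (Complex.I * ((a : ℂ) - (b : ℂ)) * m * (starRingEnd ℂ) n) from by
        push_cast; ring]
  unfold gTerm
  rw [Complex.sub_re, Complex.re_ofReal_mul, Complex.ofReal_re]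

lemma sum_rep (p : Fin d → ℝ) (M N : Matrix (Fin d) (Fin d) ℂ)
    (hM : ∀ i j, M j i = (starRingEnd ℂ) (M i j))
    (hN : ∀ i j, N j i = (starRingEnd ℂ) (N i j)) :
    ((-2) * Complex.I * ((∑ i, ∑ j, (p i : ℂ) * (N i j * M j i))
        - ∑ i, ∑ j, (p i : ℂ) * (M i j * N j i))
      - ∑ i, ∑ j, (p i : ℂ) * (N i j * N j i)).re
    = ∑ i, ∑ j, gTerm (p i) (p j) (M i j) (N i j) := by
  have key : ∀ f : Fin d → Fin d → ℂ,
      (∑ i, ∑ j, f i j) = ∑ x : Fin d × Fin d, f x.1 x.2 :=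
    fun f => (Fintype.sum_prod_type (f := fun x : Fin d × Fin d => f x.1 x.2)).symm
  have keyR : ∀ f : Fin d → Fin d → ℝ,
      (∑ i, ∑ j, f i j) = ∑ x : Fin d × Fin d, f x.1 x.2 :=
    fun f => (Fintype.sum_prod_type (f := fun x : Fin d × Fin d => f x.1 x.2)).symm
  rw [key, key, key, keyR]
  have e1 : (∑ x : Fin d × Fin d, (p x.1 : ℂ) * (N x.1 x.2 * M x.2 x.1))
      = ∑ x : Fin d × Fin d, (p x.2 : ℂ) * ((starRingEnd ℂ) (N x.1 x.2) * M x.1 x.2) := by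
    refine Fintype.sum_equiv (Equiv.prodComm _ _) _ _ fun x => ?_
    simp only [Equiv.prodComm_apply, Prod.fst_swap, Prod.snd_swap]
    rw [hN x.2 x.1]
  have e2 : (∑ x : Fin d × Fin d, (p x.1 : ℂ) * (M x.1 x.2 * N x.2 x.1))
      = ∑ x : Fin d × Fin d, (p x.1 : ℂ) * (M x.1 x.2 * (starRingEnd ℂ) (N x.1 x.2)) := by
    refine Finset.sum_congr rfl fun x _ => ?_
    rw [hN x.1 x.2]
  have e3 : (∑ x : Fin d × Fin d, (p x.1 : ℂ) * (N x.1 x.2 * N x.2 x.1))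
      = ∑ x : Fin d × Fin d, (((p x.1 + p x.2) / 2 * Complex.normSq (N x.1 x.2) : ℝ) : ℂ) := by
    have h1 : (∑ x : Fin d × Fin d, (p x.1 : ℂ) * (N x.1 x.2 * N x.2 x.1))
        = ∑ x : Fin d × Fin d, ((p x.1 * Complex.normSq (N x.1 x.2) : ℝ) : ℂ) := by
      refine Finset.sum_congr rfl fun x _ => ?_
      rw [hN x.1 x.2, Complex.mul_conj]
      push_cast; ring
    have h2 : (∑ x : Fin d × Fin d, ((p x.2 * Complex.normSq (N x.1 x.2) : ℝ) : ℂ))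
        = ∑ x : Fin d × Fin d, ((p x.1 * Complex.normSq (N x.1 x.2) : ℝ) : ℂ) := by
      refine Fintype.sum_equiv (Equiv.prodComm _ _) _ _ fun x => ?_
      simp only [Equiv.prodComm_apply, Prod.fst_swap, Prod.snd_swap]
      rw [show Complex.normSq (N x.2 x.1) = Complex.normSq (N x.1 x.2) from by
        rw [hN x.1 x.2]; exact Complex.normSq_conj _]
    rw [h1]
    have h3 : (∑ x : Fin d × Fin d, (((p x.1 + p x.2) / 2 * Complex.normSq (N x.1 x.2) : ℝ) : ℂ))
        = (∑ x : Fin d × Fin d, ((p x.1 * Complex.normSq (N x.1 x.2) : ℝ) : ℂ)) / 2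
          + (∑ x : Fin d × Fin d, ((p x.2 * Complex.normSq (N x.1 x.2) : ℝ) : ℂ)) / 2 := by
      rw [Finset.sum_div, Finset.sum_div, ← Finset.sum_add_distrib]
      refine Finset.sum_congr rfl fun x _ => ?_
      push_cast; ring
    rw [h3, h2]; ring
  rw [e1, e2, e3, ← Finset.sum_sub_distrib, Finset.mul_sum, ← Finset.sum_sub_distrib,
    Complex.re_sum]
  exact Finset.sum_congr rfl fun x _ => term_re _ _ _ _

noncomputable def G (H X ρ : Matrix (Fin d) (Fin d) ℂ) : ℝ :=
  ((-2) * Complex.I * (Matrix.trace (ρ * X * H) - Matrix.trace (ρ * H * X))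
     - Matrix.trace (ρ * X * X)).re

lemma conj_factor (U : Matrix.unitaryGroup (Fin d) ℂ) (A B C : Matrix (Fin d) (Fin d) ℂ) :
    Matrix.trace (A * B * C) =
      Matrix.trace ((star (U : Matrix (Fin d) (Fin d) ℂ) * A * (U : Matrix (Fin d) (Fin d) ℂ))
        * (star (U : Matrix (Fin d) (Fin d) ℂ) * B * (U : Matrix (Fin d) (Fin d) ℂ))
        * (star (U : Matrix (Fin d) (Fin d) ℂ) * C * (U : Matrix (Fin d) (Fin d) ℂ))) := by
  have hU' : ∀ Cm : Matrix (Fin d) (Fin d) ℂ,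
      (U : Matrix (Fin d) (Fin d) ℂ) * (star (U : Matrix (Fin d) (Fin d) ℂ) * Cm) = Cm :=
    fun Cm => by rw [← Matrix.mul_assoc, (Matrix.mem_unitaryGroup_iff).mp U.2, Matrix.one_mul]
  rw [show (star (U : Matrix (Fin d) (Fin d) ℂ) * A * (U : Matrix (Fin d) (Fin d) ℂ))
        * (star (U : Matrix (Fin d) (Fin d) ℂ) * B * (U : Matrix (Fin d) (Fin d) ℂ))
        * (star (U : Matrix (Fin d) (Fin d) ℂ) * C * (U : Matrix (Fin d) (Fin d) ℂ))
      = star (U : Matrix (Fin d) (Fin d) ℂ) * (A * B * C) * (U : Matrix (Fin d) (Fin d) ℂ) from by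
    simp only [Matrix.mul_assoc, hU'], trace_conj]

lemma trace_diag_form (p : Fin d → ℝ) (A B : Matrix (Fin d) (Fin d) ℂ) :
    Matrix.trace (Matrix.diagonal ((RCLike.ofReal : ℝ → ℂ) ∘ p) * A * B)
      = ∑ i, ∑ j, (p i : ℂ) * (A i j * B j i) := by
  have hco : (RCLike.ofReal : ℝ → ℂ) = Complex.ofReal := rfl
  simp only [Matrix.trace, Matrix.diag_apply, Matrix.mul_apply, Matrix.diagonal_apply,
    Function.comp_apply, hco, Finset.sum_mul, ite_mul, zero_mul,
    Finset.sum_ite_eq, Finset.mem_univ, if_true]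
  refine Finset.sum_congr rfl fun i _ => Finset.sum_congr rfl fun j _ => ?_
  ring

lemma herm_entry {A : Matrix (Fin d) (Fin d) ℂ} (hA : A.IsHermitian) (i j : Fin d) :
    A j i = (starRingEnd ℂ) (A i j) := by
  conv_lhs => rw [← hA.eq]
  rfl

lemma conj_herm {A : Matrix (Fin d) (Fin d) ℂ} (hA : A.IsHermitian)
    (U : Matrix.unitaryGroup (Fin d) ℂ) :
    (star (U : Matrix (Fin d) (Fin d) ℂ) * A * (U : Matrix (Fin d) (Fin d) ℂ)).IsHermitian := by
  show _ᴴ = _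
  rw [Matrix.conjTranspose_mul, Matrix.conjTranspose_mul, hA.eq,
    Matrix.star_eq_conjTranspose, Matrix.conjTranspose_conjTranspose]
  exact (Matrix.mul_assoc _ _ _).symm

end SLDAux2

namespace SLDAux3
open Matrix SLDAux SLDAux2
open scoped ComplexOrder
variable {d K : ℕ}

lemma G_rep (H : Matrix (Fin d) (Fin d) ℂ) (hH : H.IsHermitian)
    (ρ : Matrix (Fin d) (Fin d) ℂ) (hρ : ρ.IsHermitian)
    (X : Matrix (Fin d) (Fin d) ℂ) (hX : X.IsHermitian) :
    G H X ρ = ∑ i, ∑ j, gTerm (hρ.eigenvalues i) (hρ.eigenvalues j)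
      ((star (hρ.eigenvectorUnitary : Matrix (Fin d) (Fin d) ℂ) * H *
        (hρ.eigenvectorUnitary : Matrix (Fin d) (Fin d) ℂ)) i j)
      ((star (hρ.eigenvectorUnitary : Matrix (Fin d) (Fin d) ℂ) * X *
        (hρ.eigenvectorUnitary : Matrix (Fin d) (Fin d) ℂ)) i j) := by
  have hDiag : star (hρ.eigenvectorUnitary : Matrix (Fin d) (Fin d) ℂ) * ρ *
      (hρ.eigenvectorUnitary : Matrix (Fin d) (Fin d) ℂ)
      = Matrix.diagonal ((RCLike.ofReal : ℝ → ℂ) ∘ hρ.eigenvalues) := by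
    have := hρ.conjStarAlgAut_star_eigenvectorUnitary
    simpa [Unitary.conjStarAlgAut_star_apply] using this
  unfold G
  rw [conj_factor hρ.eigenvectorUnitary ρ X H, conj_factor hρ.eigenvectorUnitary ρ H X,
    conj_factor hρ.eigenvectorUnitary ρ X X, hDiag, trace_diag_form, trace_diag_form,
    trace_diag_form]
  exact sum_rep _ _ _ (herm_entry (conj_herm hH hρ.eigenvectorUnitary))
    (herm_entry (conj_herm hX hρ.eigenvectorUnitary))

lemma sldFisher_eq (ρ : Matrix (Fin d) (Fin d) ℂ) (hρ : ρ.IsHermitian)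
    (H : Matrix (Fin d) (Fin d) ℂ) :
    sldFisher ρ hρ H = ∑ i, ∑ j,
      2 * (hρ.eigenvalues i - hρ.eigenvalues j) ^ 2 / (hρ.eigenvalues i + hρ.eigenvalues j) *
        Complex.normSq ((star (hρ.eigenvectorUnitary : Matrix (Fin d) (Fin d) ℂ) * H *
          (hρ.eigenvectorUnitary : Matrix (Fin d) (Fin d) ℂ)) i j) := by
  unfold sldFisher
  refine Finset.sum_congr rfl fun i _ => Finset.sum_congr rfl fun j _ => ?_
  rw [dot_eq_conj_entry]

lemma G_le (H : Matrix (Fin d) (Fin d) ℂ) (hH : H.IsHermitian)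
    (ρ : Matrix (Fin d) (Fin d) ℂ) (hρpsd : ρ.PosSemidef)
    (X : Matrix (Fin d) (Fin d) ℂ) (hX : X.IsHermitian) :
    G H X ρ ≤ sldFisher ρ hρpsd.1 H := by
  rw [G_rep H hH ρ hρpsd.1 X hX, sldFisher_eq ρ hρpsd.1 H]
  refine Finset.sum_le_sum fun i _ => Finset.sum_le_sum fun j _ => ?_
  exact gTerm_le _ _ (hρpsd.eigenvalues_nonneg i) (hρpsd.eigenvalues_nonneg j) _ _

lemma G_eq_mix (H : Matrix (Fin d) (Fin d) ℂ) (hH : H.IsHermitian)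
    (ρ : Matrix (Fin d) (Fin d) ℂ) (hρpsd : ρ.PosSemidef) :
    ∃ X : Matrix (Fin d) (Fin d) ℂ, X.IsHermitian ∧ G H X ρ = sldFisher ρ hρpsd.1 H := by
  set hρ : ρ.IsHermitian := hρpsd.1 with hhρ
  set Uc : Matrix (Fin d) (Fin d) ℂ := (hρ.eigenvectorUnitary : Matrix (Fin d) (Fin d) ℂ)
    with hUc
  set p : Fin d → ℝ := hρ.eigenvalues with hp
  set M : Matrix (Fin d) (Fin d) ℂ := star Uc * H * Uc with hM
  set N : Matrix (Fin d) (Fin d) ℂ := Matrix.of (fun i j =>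
    Complex.I * ((2 * (p i - p j) / (p i + p j) : ℝ) : ℂ) * M i j) with hNdef
  have hMh : M.IsHermitian := conj_herm hH hρ.eigenvectorUnitary
  have hNh : N.IsHermitian := by
    ext i j
    simp only [Matrix.conjTranspose_apply, hNdef, Matrix.of_apply]
    rw [show (Complex.I * ((2 * (p j - p i) / (p j + p i) : ℝ) : ℂ) * M j i) =
        Complex.I * ((2 * (p j - p i) / (p j + p i) : ℝ) : ℂ) * M j i from rfl]
    rw [herm_entry hMh i j]
    have : (starRingEnd ℂ) (Complex.I * ((2 * (p j - p i) / (p j + p i) : ℝ) : ℂ)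
        * (starRingEnd ℂ) (M i j))
        = Complex.I * ((2 * (p i - p j) / (p i + p j) : ℝ) : ℂ) * M i j := by
      simp only [_root_.map_mul, Complex.conj_I, Complex.conj_ofReal,
        Complex.conj_conj]
      push_cast
      ring
    rw [← this]
    rfl
  refine ⟨Uc * N * star Uc, ?_, ?_⟩
  · show _ᴴ = _
    rw [Matrix.conjTranspose_mul, Matrix.conjTranspose_mul, hNh.eq,
      Matrix.star_eq_conjTranspose, Matrix.conjTranspose_conjTranspose]
    exact (Matrix.mul_assoc _ _ _).symm
  · have hstar : star Uc * Uc = 1 := (Matrix.mem_unitaryGroup_iff').mp hρ.eigenvectorUnitary.2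
    have hXherm : (Uc * N * star Uc).IsHermitian := by
      show _ᴴ = _
      rw [Matrix.conjTranspose_mul, Matrix.conjTranspose_mul, hNh.eq,
        Matrix.star_eq_conjTranspose, Matrix.conjTranspose_conjTranspose]
      exact (Matrix.mul_assoc _ _ _).symm
    have hconjX : star Uc * (Uc * N * star Uc) * Uc = N := by
      rw [show star Uc * (Uc * N * star Uc) * Uc = (star Uc * Uc) * N * (star Uc * Uc) from by
        simp only [Matrix.mul_assoc], hstar, Matrix.one_mul, Matrix.mul_one]
    rw [G_rep H hH ρ hρ (Uc * N * star Uc) hXherm, sldFisher_eq ρ hρ H]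
    refine Finset.sum_congr rfl fun i _ => Finset.sum_congr rfl fun j _ => ?_
    rw [show (star (hρ.eigenvectorUnitary : Matrix (Fin d) (Fin d) ℂ) * (Uc * N * star Uc) *
        (hρ.eigenvectorUnitary : Matrix (Fin d) (Fin d) ℂ)) = N from hconjX]
    have := gTerm_eq (p i) (p j) (hρpsd.eigenvalues_nonneg i) (hρpsd.eigenvalues_nonneg j)
      (M i j)
    simpa [hNdef] using this

lemma G_lin (H X : Matrix (Fin d) (Fin d) ℂ) (q : Fin K → ℝ)
    (ρ : Fin K → Matrix (Fin d) (Fin d) ℂ) :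
    G H X (∑ k, (q k : ℂ) • ρ k) = ∑ k, q k * G H X (ρ k) := by
  unfold G
  simp only [Finset.sum_mul, Matrix.smul_mul, Matrix.trace_sum, Matrix.trace_smul,
    smul_eq_mul]
  rw [← Finset.sum_sub_distrib, Finset.mul_sum, ← Finset.sum_sub_distrib, Complex.re_sum]
  refine Finset.sum_congr rfl fun k _ => ?_
  rw [show (-2) * Complex.I * ((q k : ℂ) * Matrix.trace (ρ k * X * H)
        - (q k : ℂ) * Matrix.trace (ρ k * H * X))
      - (q k : ℂ) * Matrix.trace (ρ k * X * X)
    = (q k : ℂ) * ((-2) * Complex.I * (Matrix.trace (ρ k * X * H)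
        - Matrix.trace (ρ k * H * X)) - Matrix.trace (ρ k * X * X)) from by ring]
  exact Complex.re_ofReal_mul _ _

lemma quad_sum (q : Fin K → ℝ) (ρ : Fin K → Matrix (Fin d) (Fin d) ℂ) (x : Fin d → ℂ) :
    star x ⬝ᵥ (∑ k, (q k : ℂ) • ρ k) *ᵥ x = ∑ k, (q k : ℂ) * (star x ⬝ᵥ (ρ k *ᵥ x)) := by
  simp only [Matrix.mulVec, dotProduct, Finset.sum_apply, Pi.smul_apply,
    Matrix.sum_apply, Matrix.smul_apply, smul_eq_mul, Finset.mul_sum, Finset.sum_mul]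
  rw [show (∑ a : Fin d, ∑ b : Fin d, ∑ k : Fin K, star x a * ((q k : ℂ) * ρ k a b * x b))
      = ∑ a : Fin d, ∑ k : Fin K, ∑ b : Fin d, star x a * ((q k : ℂ) * ρ k a b * x b) from
    Finset.sum_congr rfl fun a _ => Finset.sum_comm, Finset.sum_comm]
  refine Finset.sum_congr rfl fun k _ => Finset.sum_congr rfl fun a _ =>
    Finset.sum_congr rfl fun b _ => ?_
  ring

lemma mix_posSemidef (q : Fin K → ℝ) (hq : ∀ k, 0 ≤ q k)
    (ρ : Fin K → Matrix (Fin d) (Fin d) ℂ) (hpsd : ∀ k, (ρ k).PosSemidef)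
    (hmix : (∑ k, (q k : ℂ) • ρ k).IsHermitian) :
    (∑ k, (q k : ℂ) • ρ k).PosSemidef := by
  refine Matrix.PosSemidef.of_dotProduct_mulVec_nonneg hmix fun x => ?_
  rw [quad_sum]
  refine Finset.sum_nonneg fun k _ => mul_nonneg ?_ ((hpsd k).dotProduct_mulVec_nonneg x)
  exact Complex.zero_le_real.mpr (hq k)

end SLDAux3

open Matrix in
/-- Convexity of `I_ρ(H) = F_ρ(H)/4` in the state. -/
theorem sldFisher_div_four_convex {d K : ℕ}
    (H : Matrix (Fin d) (Fin d) ℂ) (hH : H.IsHermitian)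
    (q : Fin K → ℝ) (hq : ∀ k, 0 ≤ q k) (hqsum : ∑ k, q k = 1)
    (ρ : Fin K → Matrix (Fin d) (Fin d) ℂ)
    (hherm : ∀ k, (ρ k).IsHermitian)
    (hpsd : ∀ k, (ρ k).PosSemidef) (htr : ∀ k, (ρ k).trace = 1)
    (hmix : (∑ k, (q k : ℂ) • ρ k).IsHermitian) :
    sldFisher (∑ k, (q k : ℂ) • ρ k) hmix H / 4 ≤
      ∑ k, q k * (sldFisher (ρ k) (hherm k) H / 4) := by
  have hσpsd : (∑ k, (q k : ℂ) • ρ k).PosSemidef :=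
    SLDAux3.mix_posSemidef q hq ρ hpsd hmix
  obtain ⟨X, hX, hGeq⟩ := SLDAux3.G_eq_mix H hH _ hσpsd
  have main : sldFisher (∑ k, (q k : ℂ) • ρ k) hmix H ≤ ∑ k, q k * sldFisher (ρ k) (hherm k) H := by
    calc sldFisher (∑ k, (q k : ℂ) • ρ k) hmix H
        = SLDAux2.G H X (∑ k, (q k : ℂ) • ρ k) := hGeq.symm
      _ = ∑ k, q k * SLDAux2.G H X (ρ k) := SLDAux3.G_lin H X q ρ
      _ ≤ ∑ k, q k * sldFisher (ρ k) (hherm k) H := by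
          refine Finset.sum_le_sum fun k _ => mul_le_mul_of_nonneg_left ?_ (hq k)
          exact SLDAux3.G_le H hH (ρ k) (hpsd k) X hX
  have hrw : ∑ k, q k * (sldFisher (ρ k) (hherm k) H / 4)
      = (∑ k, q k * sldFisher (ρ k) (hherm k) H) / 4 := by
    rw [Finset.sum_div]
    exact Finset.sum_congr rfl fun k _ => by ring
  rw [hrw]
  linarith
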